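/- Fix ħ ≠ 0. There exists a unique formal power series Φ(w) = Σ_{k≥0} c_k w^k in ℚ(ħ)[[w]] with c_0 = 1 such that the formal Laurent series Φ(1/z) satisfies the quantum Bessel curve equation Φ'' + (2/ħ)·Φ' + (1/(4z²))·Φ = 0; moreover its coefficients are given explicitly by c_k = ħ^k · (∏_{i=1}^{k} (2i−1)²) / (8^k · k!). Equivalently, the coefficients satisfy c_0 = 1 and the recursion c_{k+1} = ħ·(2k+1)²/(8(k+1)) · c_k. -/

import Mathlib

/-- Coefficientwise form of the quantum Bessel curve equation
`Φ'' + (2/ħ)·Φ' + (1/(4z²))·Φ = 0` for the formal Laurent series `Φ(1/z) = Σ_k c_k z^{−k}`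
with term-by-term differentiation in `z`: comparing the coefficients of `z^{−(k+2)}` gives,
for every `k`, `k(k+1)·c_k + (2/ħ)·(−(k+1))·c_{k+1} + (1/4)·c_k = 0`. -/
def QBesselODE {F : Type*} [Field F] (hbar : F) (c : ℕ → F) : Prop :=
  ∀ k : ℕ, (k : F) * ((k : F) + 1) * c k + (2 / hbar) * (-((k : F) + 1)) * c (k + 1)
    + (1 / 4) * c k = 0

/-- The explicit coefficients `c_k = ħ^k·(∏_{i=1}^k (2i−1)²)/(8^k·k!)`. -/
noncomputable def besselCoeff {F : Type*} [Field F] (hbar : F) (k : ℕ) : F :=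
  hbar ^ k * (∏ i ∈ Finset.range k, (2 * (i : F) + 1) ^ 2) / (8 ^ k * (Nat.factorial k : F))

/-!
Since `k(k+1) + 1/4 = (2k+1)²/4`, the coefficient of `z^{−(k+2)}` in the equation reads
`(2k+1)²/4 · c_k = (2/ħ)(k+1) · c_{k+1}`, a first-order recursion. Hence `c` is determined by
`c_0 = 1`, and the product formula `besselCoeff` satisfies the same recursion.
-/

theorem seq_eq_of_recursion {α : Type*} (f : ℕ → α → α) {c d : ℕ → α} (h0 : c 0 = d 0)
    (hc : ∀ k, c (k + 1) = f k (c k)) (hd : ∀ k, d (k + 1) = f k (d k)) : c = d := by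
  funext k
  induction k with
  | zero => exact h0
  | succ k ih => rw [hc, hd, ih]

section

variable {F : Type*} [Field F] [CharZero F]

theorem qBesselODE_iff {hbar : F} (hhbar : hbar ≠ 0) (c : ℕ → F) :
    QBesselODE hbar c ↔ ∀ k : ℕ,
      c (k + 1) = hbar * (2 * (k : F) + 1) ^ 2 / (8 * ((k : F) + 1)) * c k := by
  refine forall_congr' fun k => ?_
  field_simp
  constructor <;> intro h <;> linear_combination -h

theorem besselCoeff_zero (hbar : F) : besselCoeff hbar 0 = 1 := by
  simp [besselCoeff]

theorem besselCoeff_succ (hbar : F) (k : ℕ) :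
    besselCoeff hbar (k + 1)
      = hbar * (2 * (k : F) + 1) ^ 2 / (8 * ((k : F) + 1)) * besselCoeff hbar k := by
  simp only [besselCoeff, Finset.prod_range_succ, pow_succ, Nat.factorial_succ,
    Nat.cast_mul, Nat.cast_add, Nat.cast_one]
  field_simp

end

/-- There is a unique formal power series `Φ(w) = Σ c_k w^k`, `c_0 = 1`, such that `Φ(1/z)`
satisfies the quantum Bessel curve equation; its coefficients are the explicit `besselCoeff`,
and the equation is equivalent to the recursion `c_{k+1} = ħ(2k+1)²/(8(k+1))·c_k`. -/
theorem stmt10 (F : Type*) [Field F] [CharZero F] (hbar : F) (hhbar : hbar ≠ 0) :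
    (∃! c : ℕ → F, c 0 = 1 ∧ QBesselODE hbar c) ∧
    (∀ c : ℕ → F, c 0 = 1 ∧ QBesselODE hbar c → ∀ k : ℕ, c k = besselCoeff hbar k) ∧
    (∀ c : ℕ → F, (c 0 = 1 ∧ QBesselODE hbar c) ↔
      (c 0 = 1 ∧ ∀ k : ℕ,
        c (k + 1) = hbar * (2 * (k : F) + 1) ^ 2 / (8 * ((k : F) + 1)) * c k)) := by
  have hsol : besselCoeff hbar 0 = 1 ∧ QBesselODE hbar (besselCoeff hbar) :=
    ⟨besselCoeff_zero hbar, (qBesselODE_iff hhbar _).2 (besselCoeff_succ hbar)⟩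
  have huniq (c : ℕ → F) (hc : c 0 = 1 ∧ QBesselODE hbar c) : c = besselCoeff hbar :=
    seq_eq_of_recursion _ (hc.1.trans (besselCoeff_zero hbar).symm)
      ((qBesselODE_iff hhbar c).1 hc.2) (besselCoeff_succ hbar)
  exact ⟨⟨_, hsol, huniq⟩, fun c hc => congrFun (huniq c hc),
    fun c => and_congr_right' (qBesselODE_iff hhbar c)⟩
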